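/- (Proposition 1, finite-time lower bound on the weight ratio) Suppose u(0) > 0 and 0 < v_j(0) < (1/2)·log(p/(1-p)) for every j. Fix T > 0 and set M = u(T). Then for all 0 < t < T, the weight ratio satisfies v_1(t)/u(t) > [ (1/2)·log(p/(1-p)) + log tanh( artanh( √((1-p)/p) · e^{v_1(0)} ) + e^{-M} · 2^{D-1} · (p(1-p))^{D/2} · t ) ] / log( e^{u(0)} + t · Π_{i=1}^D ( p·e^{-v_i(0)} + √(p(1-p)) ) ); in particular this ratio is positive on (0, T). -/

import Mathlib

/-!
Write `V = ½ log (p / (1 - p))` and `s = √(p (1 - p))`, so that `p e^{-V} = (1 - p) e^V = s`.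
Since `h' = -g`, the product `e^u · h(v_j)` is conserved along the flow; hence `h(v_j)` keeps
its initial sign, every `v_j` stays below `V`, and all of `u, v_1, …, v_D` are nondecreasing.
With `q = e^{v_1 - V}` one has `q h(v_1) = s (1 - q²)`, so
`(artanh q)' = e^{-u} s ∏_{i ≠ 1} g(v_i) ≥ e^{-u(T)} 2^{D-1} s^D` on `[0, T]`
by AM-GM (`g ≥ 2s`); integrating and applying `tanh` bounds `v_1` from below. For the denominator,
`(e^u)' = ∏ g(v_i) < ∏ (p e^{-v_i(0)} + s)` bounds `u` from above.
-/

noncomputable def artanh (x : ℝ) : ℝ := (1 / 2) * Real.log ((1 + x) / (1 - x))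

open Set
open Real hiding artanh

theorem artanh_eq_real_artanh {x : ℝ} (hx : x ∈ Icc (-1) 1) : artanh x = Real.artanh x :=
  (Real.artanh_eq_half_log hx).symm

theorem hasDerivAt_artanh {x : ℝ} (hx : x ∈ Ioo (-1) 1) :
    HasDerivAt artanh (1 - x ^ 2)⁻¹ x := by
  obtain ⟨h1, h2⟩ := hx
  have h1' : 1 + x ≠ 0 := by linarith
  have h2' : 1 - x ≠ 0 := by linarith
  have h3 : 1 - x ^ 2 ≠ 0 := by nlinarith
  have hq : HasDerivAt (fun y => (1 + y) / (1 - y)) (2 / (1 - x) ^ 2) x :=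
    (((hasDerivAt_id x).const_add 1).div ((hasDerivAt_id x).const_sub 1) h2').congr_deriv
      (by simp only [id]; ring)
  refine ((hq.log (div_ne_zero h1' h2')).const_mul (1 / 2)).congr_deriv ?_
  field_simp
  ring

theorem tanh_le_of_le_artanh {x y : ℝ} (hy : y ∈ Ioo (-1) 1) (hxy : x ≤ artanh y) :
    tanh x ≤ y := by
  rw [artanh_eq_real_artanh (Ioo_subset_Icc_self hy)] at hxy
  rwa [← Real.artanh_le_artanh_iff ⟨neg_one_lt_tanh x, tanh_lt_one x⟩ hy, Real.artanh_tanh]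

theorem tanh_pos_of_pos {x : ℝ} (hx : 0 < x) : 0 < tanh x := by
  rw [tanh_eq_sinh_div_cosh]
  exact div_pos (sinh_pos_iff.2 hx) (cosh_pos x)

theorem monotoneOn_of_hasDerivWithinAt_self_nonneg {s : Set ℝ} (hs : Convex ℝ s)
    {f f' : ℝ → ℝ} (hf : ∀ x ∈ s, HasDerivWithinAt f (f' x) s x)
    (hf' : ∀ x ∈ interior s, 0 ≤ f' x) :
    MonotoneOn f s :=
  monotoneOn_of_hasDerivWithinAt_nonneg hs (fun x hx => (hf x hx).continuousWithinAt)
    (fun x hx => ((hf x (interior_subset hx)).hasDerivAt (mem_interior_iff_mem_nhds.1 hx))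
      |>.hasDerivWithinAt) hf'

theorem strictMonoOn_of_hasDerivWithinAt_self_pos {s : Set ℝ} (hs : Convex ℝ s)
    {f f' : ℝ → ℝ} (hf : ∀ x ∈ s, HasDerivWithinAt f (f' x) s x)
    (hf' : ∀ x ∈ interior s, 0 < f' x) :
    StrictMonoOn f s :=
  strictMonoOn_of_hasDerivWithinAt_pos hs (fun x hx => (hf x hx).continuousWithinAt)
    (fun x hx => ((hf x (interior_subset hx)).hasDerivAt (mem_interior_iff_mem_nhds.1 hx))
      |>.hasDerivWithinAt) hf'

theorem div_lt_div_of_le_of_lt_of_pos {a b c d : ℝ} (hab : a ≤ b) (hb : 0 < b) (hc : 0 < c)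
    (hcd : c < d) : a / d < b / c := by
  rcases le_or_gt a 0 with ha | ha
  · exact (div_nonpos_of_nonpos_of_nonneg ha (hc.trans hcd).le).trans_lt (div_pos hb hc)
  · calc a / d < a / c := div_lt_div_of_pos_left ha hc hcd
      _ ≤ b / c := div_le_div_of_nonneg_right hab hc.le

theorem two_pow_mul_rpow_half {x : ℝ} (hx : 0 ≤ x) {D : ℕ} (hD : 0 < D) :
    2 ^ (D - 1) * x ^ ((D : ℝ) / 2) = √x * (2 * √x) ^ (D - 1) := by
  obtain ⟨n, rfl⟩ : ∃ n, D = n + 1 := ⟨D - 1, by omega⟩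
  rw [show ((n + 1 : ℕ) : ℝ) / 2 = 1 / 2 * (n + 1 : ℕ) by ring, rpow_mul hx, ← sqrt_eq_rpow,
    rpow_natCast, Nat.add_sub_cancel, mul_pow, pow_succ]
  ring

namespace WeightFlow

noncomputable section

def g (p x : ℝ) : ℝ := p * exp (-x) + (1 - p) * exp x

def h (p x : ℝ) : ℝ := p * exp (-x) - (1 - p) * exp x

def equilibrium (p : ℝ) : ℝ := 1 / 2 * log (p / (1 - p))

end

structure IsGradientFlow {D : ℕ} (p : ℝ) (u : ℝ → ℝ) (v : Fin D → ℝ → ℝ) :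
    Prop where
  hasDerivWithinAt_u : ∀ t ∈ Ici (0 : ℝ),
    HasDerivWithinAt u (exp (-u t) * ∏ i, g p (v i t)) (Ici 0) t
  hasDerivWithinAt_v : ∀ j, ∀ t ∈ Ici (0 : ℝ),
    HasDerivWithinAt (v j)
      (exp (-u t) * h p (v j t) * ∏ i ∈ Finset.univ.erase j, g p (v i t)) (Ici 0) t

section Equilibrium

variable {p : ℝ}

theorem hasDerivAt_h (p x : ℝ) : HasDerivAt (h p) (-g p x) x :=
  (((hasDerivAt_neg x).exp.const_mul p).sub ((hasDerivAt_exp x).const_mul (1 - p))).congr_deriv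
    (by rw [g]; ring)

theorem exp_equilibrium (hp0 : 0 < p) (hp1 : p < 1) :
    exp (equilibrium p) = √(p / (1 - p)) := by
  rw [equilibrium, one_div_mul_eq_div, exp_half, exp_log (div_pos hp0 (by linarith))]

theorem exp_neg_equilibrium (hp0 : 0 < p) (hp1 : p < 1) :
    exp (-equilibrium p) = √((1 - p) / p) := by
  rw [exp_neg, exp_equilibrium hp0 hp1, ← sqrt_inv, inv_div]

theorem mul_exp_neg_equilibrium (hp0 : 0 < p) (hp1 : p < 1) :
    p * exp (-equilibrium p) = √(p * (1 - p)) := by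
  rw [exp_neg_equilibrium hp0 hp1, eq_comm, sqrt_eq_iff_mul_self_eq_of_pos (by positivity),
    mul_mul_mul_comm, mul_self_sqrt (div_nonneg (by linarith) hp0.le)]
  field_simp

theorem one_sub_mul_exp_equilibrium (hp0 : 0 < p) (hp1 : p < 1) :
    (1 - p) * exp (equilibrium p) = √(p * (1 - p)) := by
  have hq : 0 < 1 - p := by linarith
  rw [exp_equilibrium hp0 hp1, eq_comm, sqrt_eq_iff_mul_self_eq_of_pos (by positivity),
    mul_mul_mul_comm, mul_self_sqrt (div_nonneg hp0.le hq.le)]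
  field_simp

theorem sqrt_mul_exp (hp0 : 0 < p) (hp1 : p < 1) (x : ℝ) :
    √((1 - p) / p) * exp x = exp (x - equilibrium p) := by
  rw [← exp_neg_equilibrium hp0 hp1, ← exp_add, neg_add_eq_sub]

theorem exp_sub_equilibrium_mul_mul_exp_neg (hp0 : 0 < p) (hp1 : p < 1) (x : ℝ) :
    exp (x - equilibrium p) * (p * exp (-x)) = √(p * (1 - p)) := by
  rw [← mul_exp_neg_equilibrium hp0 hp1, mul_left_comm, ← exp_add]
  ring_nf

theorem exp_sub_equilibrium_mul_one_sub_mul_exp (hp0 : 0 < p) (hp1 : p < 1) (x : ℝ) :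
    exp (x - equilibrium p) * ((1 - p) * exp x) =
      √(p * (1 - p)) * exp (x - equilibrium p) ^ 2 := by
  rw [← one_sub_mul_exp_equilibrium hp0 hp1, mul_left_comm, mul_assoc, sq, ← exp_add,
    ← exp_add, ← exp_add]
  ring_nf

theorem exp_sub_equilibrium_mul_h (hp0 : 0 < p) (hp1 : p < 1) (x : ℝ) :
    exp (x - equilibrium p) * h p x = √(p * (1 - p)) * (1 - exp (x - equilibrium p) ^ 2) := by
  rw [h, mul_sub, exp_sub_equilibrium_mul_mul_exp_neg hp0 hp1,
    exp_sub_equilibrium_mul_one_sub_mul_exp hp0 hp1]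
  ring

theorem exp_sub_equilibrium_mul_g (hp0 : 0 < p) (hp1 : p < 1) (x : ℝ) :
    exp (x - equilibrium p) * g p x = √(p * (1 - p)) * (1 + exp (x - equilibrium p) ^ 2) := by
  rw [g, mul_add, exp_sub_equilibrium_mul_mul_exp_neg hp0 hp1,
    exp_sub_equilibrium_mul_one_sub_mul_exp hp0 hp1]
  ring

theorem h_pos_iff (hp0 : 0 < p) (hp1 : p < 1) {x : ℝ} : 0 < h p x ↔ x < equilibrium p := by
  have hq := exp_pos (x - equilibrium p)
  have hs : 0 < √(p * (1 - p)) := sqrt_pos.2 (mul_pos hp0 (by linarith))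
  rw [← mul_pos_iff_of_pos_left hq, exp_sub_equilibrium_mul_h hp0 hp1, mul_pos_iff_of_pos_left hs,
    sub_pos, sq_lt_one_iff₀ hq.le, exp_lt_one_iff, sub_neg]

theorem two_mul_sqrt_le_g (hp0 : 0 < p) (hp1 : p < 1) (x : ℝ) :
    2 * √(p * (1 - p)) ≤ g p x := by
  have hq := exp_pos (x - equilibrium p)
  have hs : 0 ≤ √(p * (1 - p)) := sqrt_nonneg _
  have := exp_sub_equilibrium_mul_g hp0 hp1 x
  refine le_of_mul_le_mul_left ?_ hq
  nlinarith [mul_nonneg hs (sq_nonneg (exp (x - equilibrium p) - 1))]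

theorem g_pos (hp0 : 0 < p) (hp1 : p < 1) (x : ℝ) : 0 < g p x :=
  lt_of_lt_of_le (by positivity [sqrt_pos.2 (mul_pos hp0 (sub_pos.2 hp1))])
    (two_mul_sqrt_le_g hp0 hp1 x)

theorem g_lt (hp0 : 0 < p) (hp1 : p < 1) {x y : ℝ} (hyx : y ≤ x) (hx : x < equilibrium p) :
    g p x < p * exp (-y) + √(p * (1 - p)) := by
  rw [g, ← one_sub_mul_exp_equilibrium hp0 hp1]
  have hq : 0 < 1 - p := by linarith
  exact add_lt_add_of_le_of_lt (by gcongr) (by gcongr)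

end Equilibrium

namespace IsGradientFlow

variable {D : ℕ} {p : ℝ} {u : ℝ → ℝ} {v : Fin D → ℝ → ℝ}

theorem exp_mul_h_eq (hf : IsGradientFlow p u v) (j : Fin D) {t : ℝ} (ht : 0 ≤ t) :
    exp (u t) * h p (v j t) = exp (u 0) * h p (v j 0) := by
  have hderiv : ∀ s ∈ Ici (0 : ℝ),
      HasDerivWithinAt (fun s => exp (u s) * h p (v j s)) 0 (Ici 0) s := by
    intro s hs
    refine ((hf.hasDerivWithinAt_u s hs).exp.mul
      ((hasDerivAt_h p _).comp_hasDerivWithinAt s (hf.hasDerivWithinAt_v j s hs))).congr_deriv ?_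
    rw [Function.comp_apply, ← Finset.mul_prod_erase _ _ (Finset.mem_univ j)]
    ring
  exact constant_of_has_deriv_right_zero
    (fun s hs => (hderiv s hs.1).continuousWithinAt.mono Icc_subset_Ici_self)
    (fun s hs => (hderiv s hs.1).mono (Ici_subset_Ici.2 hs.1)) t ⟨ht, le_rfl⟩

theorem lt_equilibrium (hf : IsGradientFlow p u v) (hp0 : 0 < p) (hp1 : p < 1) {j : Fin D}
    (hj : v j 0 < equilibrium p) {t : ℝ} (ht : 0 ≤ t) : v j t < equilibrium p := by
  rw [← h_pos_iff hp0 hp1] at hj ⊢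
  refine pos_of_mul_pos_right ?_ (exp_pos (u t)).le
  rw [hf.exp_mul_h_eq j ht]
  exact mul_pos (exp_pos _) hj

theorem monotoneOn_u (hf : IsGradientFlow p u v) (hp0 : 0 < p) (hp1 : p < 1) :
    MonotoneOn u (Ici 0) :=
  monotoneOn_of_hasDerivWithinAt_self_nonneg (convex_Ici 0) hf.hasDerivWithinAt_u
    fun _ _ => mul_nonneg (exp_pos _).le (Finset.prod_nonneg fun _ _ => (g_pos hp0 hp1 _).le)

theorem monotoneOn_v (hf : IsGradientFlow p u v) (hp0 : 0 < p) (hp1 : p < 1) {j : Fin D}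
    (hj : v j 0 < equilibrium p) : MonotoneOn (v j) (Ici 0) :=
  monotoneOn_of_hasDerivWithinAt_self_nonneg (convex_Ici 0) (hf.hasDerivWithinAt_v j)
    fun _ ht => mul_nonneg (mul_nonneg (exp_pos _).le ((h_pos_iff hp0 hp1).2
      (hf.lt_equilibrium hp0 hp1 hj (interior_subset ht))).le)
      (Finset.prod_nonneg fun _ _ => (g_pos hp0 hp1 _).le)

theorem exp_u_lt [Nonempty (Fin D)] (hf : IsGradientFlow p u v) (hp0 : 0 < p) (hp1 : p < 1)
    (hv0 : ∀ i, v i 0 < equilibrium p) {t : ℝ} (ht : 0 < t) :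
    exp (u t) < exp (u 0) + t * ∏ i, (p * exp (-v i 0) + √(p * (1 - p))) := by
  set C := ∏ i, (p * exp (-v i 0) + √(p * (1 - p)))
  have hmono : StrictMonoOn (fun s => s * C - exp (u s)) (Ici 0) := by
    refine strictMonoOn_of_hasDerivWithinAt_self_pos (convex_Ici 0)
      (f' := fun s => C - ∏ i, g p (v i s)) (fun s hs => ?_) (fun s hs => ?_)
    · refine (((hasDerivWithinAt_id s _).mul_const C).sub
        (hf.hasDerivWithinAt_u s hs).exp).congr_deriv ?_
      rw [← mul_assoc, ← exp_add, add_neg_cancel, exp_zero, one_mul, one_mul]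
    · have hs0 : 0 ≤ s := interior_subset hs
      exact sub_pos.2 <| Finset.prod_lt_prod_of_nonempty (fun i _ => g_pos hp0 hp1 _)
        (fun i _ => g_lt hp0 hp1 (hf.monotoneOn_v hp0 hp1 (hv0 i) self_mem_Ici hs0 hs0)
          (hf.lt_equilibrium hp0 hp1 (hv0 i) hs0)) Finset.univ_nonempty
  have := hmono self_mem_Ici ht.le ht
  simp only [zero_mul, zero_sub] at this
  linarith

theorem le_exp_neg_mul_prod_erase_g (hf : IsGradientFlow p u v) (hp0 : 0 < p) (hp1 : p < 1)
    (j : Fin D) {s T : ℝ} (hs : 0 ≤ s) (hsT : s ≤ T) :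
    exp (-u T) * √(p * (1 - p)) * (2 * √(p * (1 - p))) ^ (D - 1) ≤
      exp (-u s) * √(p * (1 - p)) * ∏ i ∈ Finset.univ.erase j, g p (v i s) := by
  have hexp : exp (-u T) ≤ exp (-u s) :=
    exp_le_exp.2 (neg_le_neg (hf.monotoneOn_u hp0 hp1 hs (hs.trans hsT) hsT))
  have hprod : (2 * √(p * (1 - p))) ^ (D - 1) ≤ ∏ i ∈ Finset.univ.erase j, g p (v i s) := by
    have := Finset.prod_le_prod (s := Finset.univ.erase j) (fun _ _ => by positivity)
      (fun i _ => two_mul_sqrt_le_g hp0 hp1 (v i s))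
    rwa [Finset.prod_const, Finset.card_erase_of_mem (Finset.mem_univ j), Finset.card_univ,
      Fintype.card_fin] at this
  gcongr

theorem artanh_add_le (hf : IsGradientFlow p u v) (hp0 : 0 < p) (hp1 : p < 1) {j : Fin D}
    (hj : v j 0 < equilibrium p) {t T : ℝ} (ht : 0 ≤ t) (htT : t ≤ T) :
    artanh (exp (v j 0 - equilibrium p)) +
        exp (-u T) * √(p * (1 - p)) * (2 * √(p * (1 - p))) ^ (D - 1) * t ≤
      artanh (exp (v j t - equilibrium p)) := by
  set k := exp (-u T) * √(p * (1 - p)) * (2 * √(p * (1 - p))) ^ (D - 1)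
  have hq : ∀ s ∈ Ici (0 : ℝ), exp (v j s - equilibrium p) ∈ Ioo (-1) 1 := fun s hs =>
    ⟨by linarith [exp_pos (v j s - equilibrium p)],
      exp_lt_one_iff.2 (sub_neg.2 (hf.lt_equilibrium hp0 hp1 hj hs))⟩
  have hmono : MonotoneOn (fun s => artanh (exp (v j s - equilibrium p)) - k * s) (Icc 0 T) := by
    refine monotoneOn_of_hasDerivWithinAt_self_nonneg (convex_Icc 0 T)
      (f' := fun s => (1 - exp (v j s - equilibrium p) ^ 2)⁻¹ * (exp (v j s - equilibrium p) *
        (exp (-u s) * h p (v j s) * ∏ i ∈ Finset.univ.erase j, g p (v i s))) - k)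
      (fun s hs => ?_) (fun s hs => ?_)
    · exact (((hasDerivAt_artanh (hq s hs.1)).comp_hasDerivWithinAt s
        (((hf.hasDerivWithinAt_v j s hs.1).sub_const _).exp)).sub
        (((hasDerivAt_id s).const_mul k).hasDerivWithinAt.congr_deriv (mul_one k))).mono
        Icc_subset_Ici_self
    · rw [interior_Icc] at hs
      have h1q : 0 < 1 - exp (v j s - equilibrium p) ^ 2 := by
        nlinarith [(hq s hs.1.le).1, (hq s hs.1.le).2, exp_pos (v j s - equilibrium p)]
      rw [show exp (v j s - equilibrium p) *
          (exp (-u s) * h p (v j s) * ∏ i ∈ Finset.univ.erase j, g p (v i s)) =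
          exp (-u s) * (exp (v j s - equilibrium p) * h p (v j s)) *
            ∏ i ∈ Finset.univ.erase j, g p (v i s) by ring,
        exp_sub_equilibrium_mul_h hp0 hp1, sub_nonneg]
      convert hf.le_exp_neg_mul_prod_erase_g hp0 hp1 j hs.1.le hs.2.le using 1
      field_simp
  have := hmono ⟨le_rfl, ht.trans htT⟩ ⟨ht, htT⟩ ht
  simp only [mul_zero, sub_zero] at this
  linarith

theorem equilibrium_add_log_tanh_le (hf : IsGradientFlow p u v) (hp0 : 0 < p) (hp1 : p < 1)
    {j : Fin D} (hj : v j 0 < equilibrium p) {t T : ℝ} (ht : 0 ≤ t) (htT : t ≤ T) :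
    equilibrium p + log (tanh (artanh (exp (v j 0 - equilibrium p)) +
        exp (-u T) * √(p * (1 - p)) * (2 * √(p * (1 - p))) ^ (D - 1) * t)) ≤ v j t := by
  have hA : 0 < artanh (exp (v j 0 - equilibrium p)) := by
    have hq : exp (v j 0 - equilibrium p) ∈ Ioo 0 1 :=
      ⟨exp_pos _, exp_lt_one_iff.2 (sub_neg.2 hj)⟩
    rw [artanh_eq_real_artanh ⟨by linarith [hq.1], hq.2.le⟩]
    exact Real.artanh_pos hq
  have htanh := tanh_le_of_le_artanh
    ⟨by linarith [exp_pos (v j t - equilibrium p)],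
      exp_lt_one_iff.2 (sub_neg.2 (hf.lt_equilibrium hp0 hp1 hj ht))⟩
    (hf.artanh_add_le hp0 hp1 hj ht htT)
  have := log_le_log (tanh_pos_of_pos (by positivity)) htanh
  rw [log_exp] at this
  linarith

end IsGradientFlow

end WeightFlow

theorem stmt_16_general
    (D : ℕ) (hD : 0 < D) (p : ℝ) (hp : 1 / 2 < p) (hp1 : p < 1)
    (u : ℝ → ℝ) (v : Fin D → ℝ → ℝ)
    -- gradient-flow system on `[0, ∞)`
    (hu : ∀ t ∈ Set.Ici (0 : ℝ),
      HasDerivWithinAt u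
        (Real.exp (-u t) * ∏ i, (p * Real.exp (-v i t) + (1 - p) * Real.exp (v i t)))
        (Set.Ici 0) t)
    (hv : ∀ (j : Fin D), ∀ t ∈ Set.Ici (0 : ℝ),
      HasDerivWithinAt (v j)
        (Real.exp (-u t) * (p * Real.exp (-v j t) - (1 - p) * Real.exp (v j t)) *
          ∏ i ∈ Finset.univ.erase j,
            (p * Real.exp (-v i t) + (1 - p) * Real.exp (v i t)))
        (Set.Ici 0) t)
    (hu0 : 0 < u 0)
    (hv0 : ∀ j, 0 < v j 0 ∧ v j 0 < (1 / 2) * Real.log (p / (1 - p)))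
    (T : ℝ) :
    ∀ t : ℝ, 0 < t → t < T →
      ((1 / 2) * Real.log (p / (1 - p)) +
          Real.log (Real.tanh (artanh (Real.sqrt ((1 - p) / p) * Real.exp (v ⟨0, hD⟩ 0)) +
            Real.exp (-u T) * 2 ^ (D - 1) * (p * (1 - p)) ^ ((D : ℝ) / 2) * t))) /
        Real.log (Real.exp (u 0) +
          t * ∏ i, (p * Real.exp (-v i 0) + Real.sqrt (p * (1 - p))))
      < v ⟨0, hD⟩ t / u t
      ∧ 0 < v ⟨0, hD⟩ t / u t := by
  intro t ht htT
  have hp0 : 0 < p := by linarith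
  have hf : WeightFlow.IsGradientFlow p u v := ⟨hu, hv⟩
  have : Nonempty (Fin D) := ⟨⟨0, hD⟩⟩
  have hlt : ∀ i, v i 0 < WeightFlow.equilibrium p := fun i => (hv0 i).2
  have hvt : 0 < v ⟨0, hD⟩ t :=
    (hv0 _).1.trans_le (hf.monotoneOn_v hp0 hp1 (hlt _) self_mem_Ici ht.le ht.le)
  have hut : 0 < u t := hu0.trans_le (hf.monotoneOn_u hp0 hp1 self_mem_Ici ht.le ht.le)
  have hden := (lt_log_iff_exp_lt (by positivity)).2 (hf.exp_u_lt hp0 hp1 hlt ht)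
  have hnum := hf.equilibrium_add_log_tanh_le hp0 hp1 (hlt ⟨0, hD⟩) ht.le htT.le
  rw [WeightFlow.sqrt_mul_exp hp0 hp1, mul_assoc (exp (-u T)),
    two_pow_mul_rpow_half (mul_pos hp0 (sub_pos.2 hp1)).le hD, ← mul_assoc (exp (-u T))]
  exact ⟨div_lt_div_of_le_of_lt_of_pos hnum hvt hut hden, div_pos hvt hut⟩

/-- **Proposition 1, finite-time lower bound on the weight ratio.** -/
theorem stmt_16
    (D : ℕ) (hD : 0 < D) (p : ℝ) (hp : 1 / 2 < p) (hp1 : p < 1)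
    (u : ℝ → ℝ) (v : Fin D → ℝ → ℝ)
    -- gradient-flow system on `[0, ∞)`
    (hu : ∀ t ∈ Set.Ici (0 : ℝ),
      HasDerivWithinAt u
        (Real.exp (-u t) * ∏ i, (p * Real.exp (-v i t) + (1 - p) * Real.exp (v i t)))
        (Set.Ici 0) t)
    (hv : ∀ (j : Fin D), ∀ t ∈ Set.Ici (0 : ℝ),
      HasDerivWithinAt (v j)
        (Real.exp (-u t) * (p * Real.exp (-v j t) - (1 - p) * Real.exp (v j t)) *
          ∏ i ∈ Finset.univ.erase j,
            (p * Real.exp (-v i t) + (1 - p) * Real.exp (v i t)))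
        (Set.Ici 0) t)
    (hu0 : 0 < u 0)
    (hv0 : ∀ j, 0 < v j 0 ∧ v j 0 < (1 / 2) * Real.log (p / (1 - p)))
    (T : ℝ) (hT : 0 < T) :
    ∀ t : ℝ, 0 < t → t < T →
      ((1 / 2) * Real.log (p / (1 - p)) +
          Real.log (Real.tanh (artanh (Real.sqrt ((1 - p) / p) * Real.exp (v ⟨0, hD⟩ 0)) +
            Real.exp (-u T) * 2 ^ (D - 1) * (p * (1 - p)) ^ ((D : ℝ) / 2) * t))) /
        Real.log (Real.exp (u 0) +
          t * ∏ i, (p * Real.exp (-v i 0) + Real.sqrt (p * (1 - p))))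
      < v ⟨0, hD⟩ t / u t
      ∧ 0 < v ⟨0, hD⟩ t / u t :=
  stmt_16_general D hD p hp hp1 u v hu hv hu0 hv0 T
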